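/- arXiv:0903.5103 — 2 statements merged into one kernel-verified Lean document; each statement's English description precedes it below -/
import Mathlib

section
/- Let 𝔽 be a field with at least r elements (r ≥ 1), let K be a commutative 𝔽-algebra, and let w₁,…,w_r : K → ℤ∪{∞} be maps such that for each i: w_i(0) = ∞, w_i(a+b) ≥ min(w_i(a), w_i(b)) for all a, b ∈ K, and w_i(μ·a) = w_i(a) for every nonzero μ ∈ 𝔽 and a ∈ K. Let m = (m₁,…,m_r) ∈ ℤ^r and let f₁,…,f_r ∈ K be such that w_j(f_i) ≥ −m_j for all i, j ∈ {1,…,r} and w_i(f_i) = −m_i for each i. Then there exist μ₁,…,μ_r ∈ 𝔽 such that the element f = μ₁f₁ + ⋯ + μ_r f_r satisfies w_i(f) = −m_i for every i = 1,…,r. -/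
open Cardinal in
/-- A vector space over a field with at least `n` elements is not the union of
`n` proper subspaces. -/
lemma avoid_subspaces {𝔽 V : Type*} [Field 𝔽] [AddCommGroup V] [Module 𝔽 V] :
    ∀ (n : ℕ), (n : Cardinal) ≤ #𝔽 → ∀ (p : Fin n → Submodule 𝔽 V), (∀ i, p i ≠ ⊤) →
    ∃ x : V, ∀ i, x ∉ p i := by
  intro n
  induction n with
  | zero => exact fun _ _ _ => ⟨0, fun i => i.elim0⟩
  | succ n ih =>
    intro hcard p hp
    obtain ⟨y, hy⟩ := ih (le_trans (by exact_mod_cast Nat.cast_le.mpr n.le_succ) hcard)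
      (fun i => p i.castSucc) (fun i => hp _)
    obtain ⟨z, hz⟩ : ∃ z, z ∉ p (Fin.last n) := by
      by_contra h
      push_neg at h
      exact hp (Fin.last n) (Submodule.eq_top_iff'.mpr h)
    by_cases hyl : y ∈ p (Fin.last n)
    · -- consider the "line" `z + t • y`
      have hsub : ∀ i : Fin n, ∀ t t' : 𝔽, z + t • y ∈ p i.castSucc →
          z + t' • y ∈ p i.castSucc → t = t' := by
        intro i t t' h1 h2
        by_contra hne
        have : (t - t') • y ∈ p i.castSucc := by
          have := Submodule.sub_mem _ h1 h2
          simpa [sub_smul] using this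
        exact hy i ((Submodule.smul_mem_iff _ (sub_ne_zero.mpr hne)).mp this)
      have : ∃ t : 𝔽, ∀ i : Fin n, z + t • y ∉ p i.castSucc := by
        by_contra h
        push_neg at h
        choose g hg using h
        have hinj : Function.Injective g := fun t t' he => by
          rcases he with he
          exact hsub (g t) t t' (hg t) (he ▸ hg t')
        have hfin : Finite 𝔽 := Finite.of_injective g hinj
        letI := Fintype.ofFinite 𝔽
        have h1 : Fintype.card 𝔽 ≤ n := by
          simpa using Fintype.card_le_of_injective g hinj
        have h2 : n + 1 ≤ Fintype.card 𝔽 := by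
          rw [Cardinal.mk_fintype] at hcard
          exact_mod_cast hcard
        omega
      obtain ⟨t, ht⟩ := this
      refine ⟨z + t • y, fun i => ?_⟩
      refine Fin.lastCases ?_ (fun i => ht i) i
      intro hmem
      exact hz (by simpa using Submodule.sub_mem _ hmem (Submodule.smul_mem _ t hyl))
    · exact ⟨y, fun i => Fin.lastCases hyl hy i⟩

/-- The ultrametric bound for finite sums. -/
lemma le_w_sum {K : Type*} [CommRing K] (w : K → WithTop ℤ)
    (hzero : w 0 = ⊤) (hadd : ∀ a b : K, min (w a) (w b) ≤ w (a + b))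
    (c : WithTop ℤ) {ι : Type*} (s : Finset ι) (g : ι → K)
    (h : ∀ j ∈ s, c ≤ w (g j)) : c ≤ w (∑ j ∈ s, g j) := by
  classical
  induction s using Finset.cons_induction with
  | empty => simp [hzero]
  | cons a s ha ih =>
    rw [Finset.sum_cons]
    refine le_trans ?_ (hadd _ _)
    exact le_min (h a (Finset.mem_cons_self a s)) (ih fun j hj => h j (Finset.mem_cons_of_mem hj))

/-- if `𝔽` has at least `r` elements, `K` is a commutative `𝔽`-algebra
and `w₁, …, w_r : K → ℤ ∪ {∞}` satisfy `wᵢ(0) = ∞`, the ultrametric inequality and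
invariance under multiplication by nonzero scalars, then from elements `f₁, …, f_r`
with `w_j(f_i) ≥ -m_j` for all `i, j` and `w_i(f_i) = -m_i` one can build a linear
combination `f = μ₁ f₁ + ⋯ + μ_r f_r` with `w_i(f) = -m_i` for every `i`. -/
theorem exists_combination_with_prescribed_values {r : ℕ} (hr : 1 ≤ r)
    (𝔽 : Type*) [Field 𝔽] (hcard : (r : Cardinal) ≤ Cardinal.mk 𝔽)
    (K : Type*) [CommRing K] [Algebra 𝔽 K]
    (w : Fin r → K → WithTop ℤ)
    (hzero : ∀ i : Fin r, w i 0 = ⊤)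
    (hadd : ∀ (i : Fin r) (a b : K), min (w i a) (w i b) ≤ w i (a + b))
    (hsmul : ∀ (i : Fin r) (μ : 𝔽), μ ≠ 0 → ∀ a : K, w i (μ • a) = w i a)
    (m : Fin r → ℤ) (f : Fin r → K)
    (hge : ∀ i j : Fin r, ((-(m j) : ℤ) : WithTop ℤ) ≤ w j (f i))
    (heq : ∀ i : Fin r, w i (f i) = ((-(m i) : ℤ) : WithTop ℤ)) :
    ∃ μ : Fin r → 𝔽, ∀ i : Fin r,
      w i (∑ j : Fin r, μ j • f j) = ((-(m i) : ℤ) : WithTop ℤ) := by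
  classical
  -- lower bound for any coefficient vector
  have hlow : ∀ (μ : Fin r → 𝔽) (i : Fin r),
      ((-(m i) : ℤ) : WithTop ℤ) ≤ w i (∑ j : Fin r, μ j • f j) := by
    intro μ i
    refine le_w_sum (w i) (hzero i) (hadd i) _ _ _ (fun j _ => ?_)
    by_cases hμ : μ j = 0
    · simp [hμ, hzero i]
    · rw [hsmul i (μ j) hμ (f j)]
      exact hge j i
  -- the bad sets are proper subspaces of `𝔽^r`
  set p : Fin r → Submodule 𝔽 (Fin r → 𝔽) := fun i =>
    { carrier := {μ | ((-(m i) : ℤ) : WithTop ℤ) < w i (∑ j : Fin r, μ j • f j)}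
      add_mem' := by
        intro μ ν hμ hν
        have : ∑ j : Fin r, (μ + ν) j • f j
            = (∑ j : Fin r, μ j • f j) + ∑ j : Fin r, ν j • f j := by
          rw [← Finset.sum_add_distrib]
          exact Finset.sum_congr rfl fun j _ => by simp [add_smul]
        rw [Set.mem_setOf_eq, this]
        exact lt_of_lt_of_le (lt_min hμ hν) (hadd i _ _)
      zero_mem' := by
        simp only [Set.mem_setOf_eq, Pi.zero_apply, zero_smul, Finset.sum_const_zero,
          hzero i]
        exact WithTop.coe_lt_top (-(m i))
      smul_mem' := by
        intro c μ hμ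
        by_cases hc : c = 0
        · subst hc
          simp only [Set.mem_setOf_eq, zero_smul, Pi.zero_apply, Pi.smul_apply,
            smul_eq_mul, zero_mul, Finset.sum_const_zero, hzero i]
          exact WithTop.coe_lt_top (-(m i))
        · have : ∑ j : Fin r, (c • μ) j • f j = c • ∑ j : Fin r, μ j • f j := by
            rw [Finset.smul_sum]
            exact Finset.sum_congr rfl fun j _ => by
              simp [smul_smul]
          rw [Set.mem_setOf_eq, this, hsmul i c hc]
          exact hμ } with hp
  have hne : ∀ i, p i ≠ ⊤ := by
    intro i htop
    have hmem : (Pi.single i (1 : 𝔽) : Fin r → 𝔽) ∈ p i := htop ▸ Submodule.mem_top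
    have hsum : ∑ j : Fin r, (Pi.single i (1 : 𝔽) : Fin r → 𝔽) j • f j = f i := by
      rw [Finset.sum_eq_single i]
      · simp
      · intro j _ hij
        simp [Pi.single_eq_of_ne hij]
      · intro h
        exact absurd (Finset.mem_univ i) h
    have := hmem
    rw [hp] at this
    simp only [Submodule.mem_mk, AddSubmonoid.mem_mk, AddSubsemigroup.mem_mk,
      Set.mem_setOf_eq, hsum, heq i] at this
    exact lt_irrefl _ this
  obtain ⟨μ, hμ⟩ := avoid_subspaces r hcard p hne
  refine ⟨μ, fun i => le_antisymm ?_ (hlow μ i)⟩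
  have := hμ i
  rw [hp] at this
  simpa only [Submodule.mem_mk, AddSubmonoid.mem_mk, AddSubsemigroup.mem_mk,
    Set.mem_setOf_eq, not_lt] using this
end

section
/- Let ℓ : ℤ² → ℤ satisfy 0 ≤ ℓ(n) − ℓ(n − e_i) ≤ 1 for every n ∈ ℤ² and i = 1, 2, where e₁ = (1,0) and e₂ = (0,1). Set d(n) := ℓ(n) − ℓ(n − (1,1)) and Γ := {n ∈ ℤ² : ℓ(n) − ℓ(n − e₁) = 1 and ℓ(n) − ℓ(n − e₂) = 1}. For n ∈ ℤ² put ∇(n) := {m ∈ Γ : (m₁ = n₁ and m₂ < n₂) or (m₂ = n₂ and m₁ < n₁)}, and call n maximal if n ∈ Γ and ∇(n) = ∅. Assume: (i) if d(n) ≥ 1 then n ∈ Γ; (ii) for n ∈ Γ, d(n) = 1 if and only if ∇(n) = ∅; (iii) if a, b ∈ Γ with a₁ ≠ b₁ and a₂ ≠ b₂, then (min(a₁,b₁), min(a₂,b₂)) ∈ Γ. Define c(n) := d(n) − d(n − e₁) − d(n − e₂) + d(n − (1,1)). Then for every n ∈ ℤ²: c(n) = [n is maximal] − [n − (1,1) is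 maximal] (Iverson brackets). In particular c(n) = 1 if and only if n is maximal and n − (1,1) is not, c(n) = −1 if and only if n − (1,1) is maximal and n is not, and c(n) = 0 otherwise. -/
open Classical in
/-- combinatorial description of the coefficients
`c(n) = d(n) - d(n-e₁) - d(n-e₂) + d(n-(1,1))` of the series
`L(t) = (1-t₁)(1-t₂)P(t)` : `c(n) = [n maximal] - [n-(1,1) maximal]`. -/
theorem coefficients_L_series_two_points
    (ℓ : ℤ × ℤ → ℤ)
    (h1 : ∀ n : ℤ × ℤ, 0 ≤ ℓ n - ℓ (n - (1, 0)) ∧ ℓ n - ℓ (n - (1, 0)) ≤ 1)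
    (h2 : ∀ n : ℤ × ℤ, 0 ≤ ℓ n - ℓ (n - (0, 1)) ∧ ℓ n - ℓ (n - (0, 1)) ≤ 1)
    (d : ℤ × ℤ → ℤ) (hd : ∀ n : ℤ × ℤ, d n = ℓ n - ℓ (n - (1, 1)))
    (Γ : Set (ℤ × ℤ))
    (hΓ : ∀ n : ℤ × ℤ,
      n ∈ Γ ↔ ℓ n - ℓ (n - (1, 0)) = 1 ∧ ℓ n - ℓ (n - (0, 1)) = 1)
    (nabla : ℤ × ℤ → Set (ℤ × ℤ))
    (hnabla : ∀ n : ℤ × ℤ, nabla n =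
      {m ∈ Γ | (m.1 = n.1 ∧ m.2 < n.2) ∨ (m.2 = n.2 ∧ m.1 < n.1)})
    (maximal : ℤ × ℤ → Prop)
    (hmaximal : ∀ n : ℤ × ℤ, maximal n ↔ n ∈ Γ ∧ nabla n = ∅)
    (hi : ∀ n : ℤ × ℤ, 1 ≤ d n → n ∈ Γ)
    (hii : ∀ n ∈ Γ, (d n = 1 ↔ nabla n = ∅))
    (hiii : ∀ a ∈ Γ, ∀ b ∈ Γ, a.1 ≠ b.1 → a.2 ≠ b.2 →
      (min a.1 b.1, min a.2 b.2) ∈ Γ)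
    (c : ℤ × ℤ → ℤ)
    (hc : ∀ n : ℤ × ℤ,
      c n = d n - d (n - (1, 0)) - d (n - (0, 1)) + d (n - (1, 1))) :
    ∀ n : ℤ × ℤ, c n =
      (if maximal n then 1 else 0) - (if maximal (n - (1, 1)) then 1 else 0) := by
  have hsub1 : ∀ m : ℤ × ℤ, m - (1, 0) - (0, 1) = m - (1, 1) := by
    intro m
    ext <;> simp <;> ring
  have hsub2 : ∀ m : ℤ × ℤ, m - (0, 1) - (1, 0) = m - (1, 1) := by
    intro m
    ext <;> simp <;> ring
  -- membership in Γ is equivalent to each single increment being 1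
  have hGa : ∀ m : ℤ × ℤ, m ∈ Γ ↔ ℓ m - ℓ (m - (1, 0)) = 1 := by
    intro m
    constructor
    · exact fun h => ((hΓ m).mp h).1
    · intro ha
      apply hi
      have hb := (h2 (m - (1, 0))).1
      rw [hsub1 m] at hb
      rw [hd]
      linarith
  have hGb : ∀ m : ℤ × ℤ, m ∈ Γ ↔ ℓ m - ℓ (m - (0, 1)) = 1 := by
    intro m
    constructor
    · exact fun h => ((hΓ m).mp h).2
    · intro hb
      apply hi
      have ha := (h1 (m - (0, 1))).1
      rw [hsub2 m] at ha
      rw [hd]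
      linarith
  have aval : ∀ m : ℤ × ℤ, (if m ∈ Γ then (1 : ℤ) else 0) = ℓ m - ℓ (m - (1, 0)) := by
    intro m
    by_cases h : m ∈ Γ
    · rw [if_pos h]; exact ((hGa m).mp h).symm
    · rw [if_neg h]
      have hne : ℓ m - ℓ (m - (1, 0)) ≠ 1 := fun hh => h ((hGa m).mpr hh)
      have hle := (h1 m).2
      have hge := (h1 m).1
      have hlt : ℓ m - ℓ (m - (1, 0)) < 1 := lt_of_le_of_ne hle hne
      have := Int.lt_iff_add_one_le.mp hlt
      linarith
  have bval : ∀ m : ℤ × ℤ, (if m ∈ Γ then (1 : ℤ) else 0) = ℓ m - ℓ (m - (0, 1)) := by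
    intro m
    by_cases h : m ∈ Γ
    · rw [if_pos h]; exact ((hGb m).mp h).symm
    · rw [if_neg h]
      have hne : ℓ m - ℓ (m - (0, 1)) ≠ 1 := fun hh => h ((hGb m).mpr hh)
      have hle := (h2 m).2
      have hge := (h2 m).1
      have hlt : ℓ m - ℓ (m - (0, 1)) < 1 := lt_of_le_of_ne hle hne
      have := Int.lt_iff_add_one_le.mp hlt
      linarith
  have dval1 : ∀ m : ℤ × ℤ,
      d m = (if m ∈ Γ then (1 : ℤ) else 0) + (if m - (1, 0) ∈ Γ then (1 : ℤ) else 0) := by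
    intro m
    rw [hd m, aval m, bval (m - (1, 0)), hsub1 m]
    ring
  have dval2 : ∀ m : ℤ × ℤ,
      d m = (if m ∈ Γ then (1 : ℤ) else 0) + (if m - (0, 1) ∈ Γ then (1 : ℤ) else 0) := by
    intro m
    rw [hd m, bval m, aval (m - (0, 1)), hsub2 m]
    ring
  have up1 : ∀ m : ℤ × ℤ, m - (1, 0) ∈ Γ → m ∈ Γ := by
    intro m h
    apply hi
    rw [dval1 m, if_pos h]
    by_cases h0 : m ∈ Γ <;> simp [h0]
  have maxiff : ∀ m : ℤ × ℤ, maximal m ↔ (m ∈ Γ ∧ m - (1, 0) ∉ Γ) := by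
    intro m
    rw [hmaximal m]
    constructor
    · rintro ⟨hg, hn⟩
      refine ⟨hg, ?_⟩
      have hd1 : d m = 1 := (hii m hg).mpr hn
      rw [dval1 m, if_pos hg] at hd1
      intro hmem
      rw [if_pos hmem] at hd1
      norm_num at hd1
    · rintro ⟨hg, hn⟩
      refine ⟨hg, (hii m hg).mp ?_⟩
      rw [dval1 m, if_pos hg, if_neg hn]
      norm_num
  intro n
  have e1 : d n = (if n ∈ Γ then (1 : ℤ) else 0) + (if n - (1, 0) ∈ Γ then (1 : ℤ) else 0) :=
    dval1 n
  have e2 : d (n - (1, 0)) =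
      (if n - (1, 0) ∈ Γ then (1 : ℤ) else 0) + (if n - (1, 1) ∈ Γ then (1 : ℤ) else 0) := by
    have := dval2 (n - (1, 0)); rwa [hsub1 n] at this
  have e3 : d (n - (0, 1)) =
      (if n - (0, 1) ∈ Γ then (1 : ℤ) else 0) + (if n - (1, 1) ∈ Γ then (1 : ℤ) else 0) := by
    have := dval1 (n - (0, 1)); rwa [hsub2 n] at this
  have e4 : d (n - (1, 1)) =
      (if n - (1, 1) ∈ Γ then (1 : ℤ) else 0) +
        (if n - (1, 1) - (1, 0) ∈ Γ then (1 : ℤ) else 0) :=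
    dval1 (n - (1, 1))
  have e5 : (if n - (1, 0) ∈ Γ then (1 : ℤ) else 0) = (if n - (0, 1) ∈ Γ then (1 : ℤ) else 0) := by
    have h := (dval1 n).symm.trans (dval2 n)
    linarith
  have u1 : n - (1, 0) ∈ Γ → n ∈ Γ := up1 n
  have u4 : n - (1, 1) - (1, 0) ∈ Γ → n - (1, 1) ∈ Γ := up1 (n - (1, 1))
  have m1 := maxiff n
  have m2 := maxiff (n - (1, 1))
  have M1 : (if maximal n then (1 : ℤ) else 0) =
      (if n ∈ Γ ∧ n - (1, 0) ∉ Γ then (1 : ℤ) else 0) := by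
    by_cases h : maximal n
    · rw [if_pos h, if_pos (m1.mp h)]
    · rw [if_neg h, if_neg fun hh => h (m1.mpr hh)]
  have M2 : (if maximal (n - (1, 1)) then (1 : ℤ) else 0) =
      (if n - (1, 1) ∈ Γ ∧ n - (1, 1) - (1, 0) ∉ Γ then (1 : ℤ) else 0) := by
    by_cases h : maximal (n - (1, 1))
    · rw [if_pos h, if_pos (m2.mp h)]
    · rw [if_neg h, if_neg fun hh => h (m2.mpr hh)]
  rw [hc n, e1, e2, e3, e4, M1, M2]
  clear hc hd hΓ hnabla hmaximal hi hii hiii h1 h2 hGa hGb aval bval dval1 dval2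
  clear up1 maxiff e1 e2 e3 e4 m1 m2 hsub1 hsub2 M1 M2
  by_cases G0 : n ∈ Γ <;> by_cases G1 : n - (1, 0) ∈ Γ <;>
    by_cases G2 : n - (0, 1) ∈ Γ <;> by_cases G3 : n - (1, 1) ∈ Γ <;>
    by_cases G4 : n - (1, 1) - (1, 0) ∈ Γ <;>
    simp_all <;> omega
end
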